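/- arXiv:2107.01358 — 6 statements merged into one kernel-verified Lean document; each statement's English description precedes it below -/
import Mathlib

section
/- Let K be a 3×3 kernel (single channel) and consider the convolution applied to an H×W image padded with 2 rows of zeros on top and 2 columns of zeros on the left (no padding on bottom/right), producing an H×W output. Then the matrix M representing this linear map (with pixels ordered lexicographically by (row, column)) is lower triangular, and every diagonal entry of M equals K_{3,3} (the bottom-right kernel entry). -/
/-- Matrix of the 3×3 convolution applied to an H×W single-channel image padded
with 2 zeros on top and 2 on the left only, in row-major pixel ordering.
Entry at (output pixel p, input pixel q). -/
def convMatrix (H W : ℕ) (K : Fin 3 → Fin 3 → ℝ) :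
    Matrix (Fin H × Fin W) (Fin H × Fin W) ℝ := fun p q =>
  ∑ l : Fin 3, ∑ h : Fin 3,
    if (p.1 : ℕ) + l = (q.1 : ℕ) + 2 ∧ (p.2 : ℕ) + h = (q.2 : ℕ) + 2 then K l h else 0

/-- The matrix of the top-left padded 3×3 convolution is lower triangular in
row-major order, with every diagonal entry equal to K₃₃. -/
theorem stmt_0 (H W : ℕ) (K : Fin 3 → Fin 3 → ℝ) :
    (∀ p q : Fin H × Fin W,
      (p.1 : ℕ) * W + (p.2 : ℕ) < (q.1 : ℕ) * W + (q.2 : ℕ) → convMatrix H W K p q = 0) ∧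
    (∀ p : Fin H × Fin W, convMatrix H W K p p = K 2 2) := by
  constructor
  · rintro ⟨i, j⟩ ⟨i2, j2⟩ hlt
    simp only at hlt
    apply Finset.sum_eq_zero; intro l _
    apply Finset.sum_eq_zero; intro h _
    rw [if_neg]
    rintro ⟨h1, h2⟩
    simp only at h1 h2
    have hl := l.is_lt
    have hh := h.is_lt
    have hi : (i2 : ℕ) ≤ i := by omega
    have hj : (j2 : ℕ) ≤ j := by omega
    have := Nat.mul_le_mul_right W hi
    omega
  · rintro ⟨i, j⟩
    simp only [convMatrix, Fin.sum_univ_three]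
    norm_num
end

section
/- Let k ≥ 1 and consider a k×k single-channel convolution with (k−1) zeros of padding on the top and left only, applied to an H×W image. The resulting linear endomorphism of ℝ^{H·W} (row-major pixel order) is lower triangular with all diagonal entries equal to K_{k,k}, and hence is invertible if and only if K_{k,k} ≠ 0. -/
/-!
The entry of the convolution matrix at `(p, q)` collects the kernel weight that carries pixel `q`
to pixel `p`; with padding only on the top and left, a pixel only feeds pixels weakly below and to
the right of it, and only itself through the corner weight `K_{k,k}`. So the matrix is triangular
for the componentwise order on pixels, hence for any linear order extending it (row-major order
among them), and its determinant is `K_{k,k} ^ (H * W)`.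
-/

/-- Matrix of the k×k convolution applied to an H×W single-channel image padded
with (k-1) zeros on top and on the left only, in row-major pixel ordering. -/
def convMatrixK (k H W : ℕ) (K : Fin k → Fin k → ℝ) :
    Matrix (Fin H × Fin W) (Fin H × Fin W) ℝ := fun p q =>
  ∑ l : Fin k, ∑ h : Fin k,
    if (p.1 : ℕ) + (l : ℕ) + 1 = (q.1 : ℕ) + k ∧ (p.2 : ℕ) + (h : ℕ) + 1 = (q.2 : ℕ) + k
    then K l h else 0

theorem Matrix.det_of_forall_not_le_eq_zero {m R : Type*} [PartialOrder m] [Fintype m]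
    [DecidableEq m] [CommRing R] (M : Matrix m m R) (h : ∀ i j, ¬ j ≤ i → M i j = 0) :
    M.det = ∏ i, M i i := by
  let e : m ≃ LinearExtension m := Equiv.refl _
  let : Fintype (LinearExtension m) := Fintype.ofEquiv m e
  have hM : (M.submatrix e.symm e.symm).IsLowerTriangular := fun i j hij =>
    h _ _ fun hji => (toLinearExtension.monotone hji).not_gt hij
  rw [← det_submatrix_equiv_self e.symm, det_of_isLowerTriangular _ hM]
  exact e.symm.prod_comp fun i => M i i

theorem Prod.rowMajor_le_of_le {H W : ℕ} {p q : Fin H × Fin W} (hpq : p ≤ q) :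
    (p.1 : ℕ) * W + p.2 ≤ q.1 * W + q.2 :=
  add_le_add (Nat.mul_le_mul_right W hpq.1) hpq.2

section

variable {k H W : ℕ} (K : Fin k → Fin k → ℝ)

theorem convMatrixK_apply_eq_zero_of_not_le {p q : Fin H × Fin W} (hqp : ¬ q ≤ p) :
    convMatrixK k H W K p q = 0 := by
  refine Finset.sum_eq_zero fun l _ => Finset.sum_eq_zero fun h _ => if_neg ?_
  rintro ⟨h₁, h₂⟩
  exact hqp (Prod.mk_le_mk.2 ⟨Fin.le_def.2 (by omega), Fin.le_def.2 (by omega)⟩)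

theorem convMatrixK_apply_self (hk : 0 < k) (p : Fin H × Fin W) :
    convMatrixK k H W K p p = K ⟨k - 1, by omega⟩ ⟨k - 1, by omega⟩ := by
  have hcond : ∀ l h : Fin k, ((p.1 : ℕ) + l + 1 = p.1 + k ∧ (p.2 : ℕ) + h + 1 = p.2 + k) ↔
      (l = ⟨k - 1, by omega⟩ ∧ h = ⟨k - 1, by omega⟩) := by
    intro l h
    simp only [Fin.ext_iff]
    omega
  simp [convMatrixK, hcond, ite_and]

theorem det_convMatrixK (hk : 0 < k) :
    (convMatrixK k H W K).det = K ⟨k - 1, by omega⟩ ⟨k - 1, by omega⟩ ^ (H * W) := by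
  rw [Matrix.det_of_forall_not_le_eq_zero _ fun p q => convMatrixK_apply_eq_zero_of_not_le K]
  simp [convMatrixK_apply_self K hk]

end

/-- For any k ≥ 1, the top-left (k−1)-padded k×k convolution matrix is lower
triangular with all diagonal entries equal to K_{k,k}; hence it is invertible
iff K_{k,k} ≠ 0. -/
theorem stmt_4 (k H W : ℕ) (hk : 0 < k) (hH : 0 < H) (hW : 0 < W)
    (K : Fin k → Fin k → ℝ) :
    (∀ p q : Fin H × Fin W,
      (p.1 : ℕ) * W + (p.2 : ℕ) < (q.1 : ℕ) * W + (q.2 : ℕ) → convMatrixK k H W K p q = 0) ∧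
    (∀ p : Fin H × Fin W,
      convMatrixK k H W K p p = K ⟨k - 1, by omega⟩ ⟨k - 1, by omega⟩) ∧
    (IsUnit (convMatrixK k H W K) ↔ K ⟨k - 1, by omega⟩ ⟨k - 1, by omega⟩ ≠ 0) := by
  refine ⟨fun p q hpq => convMatrixK_apply_eq_zero_of_not_le K fun hqp =>
      (Prod.rowMajor_le_of_le hqp).not_gt hpq, convMatrixK_apply_self K hk, ?_⟩
  rw [Matrix.isUnit_iff_isUnit_det, isUnit_iff_ne_zero, det_convMatrixK K hk]
  exact pow_ne_zero_iff (Nat.mul_pos hH hW).ne'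
end

section
/- For the multi-channel top-left-padded 3×3 convolution with C input and C output channels, the convolution matrix M (pixels ordered lexicographically by (row, column, channel)) is block lower triangular with H·W diagonal blocks each equal to the C×C matrix K_{3,3,·,·}; consequently M is invertible if and only if the C×C matrix (K_{3,3,c_i,c_o}) is invertible, and det M = det(K_{3,3,·,·})^{H·W}. -/
/-- Matrix of the multi-channel 3×3 convolution (C input, C output channels)
applied to an H×W×C image padded spatially with 2 zeros on top and left only.
Index (i, j, c) corresponds to vector index c + C·j + C·W·i.
Kernel K l h cᵢ c_o. -/
def convMatrixC (H W C : ℕ) (K : Fin 3 → Fin 3 → Fin C → Fin C → ℝ) :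
    Matrix (Fin H × Fin W × Fin C) (Fin H × Fin W × Fin C) ℝ := fun p q =>
  ∑ l : Fin 3, ∑ h : Fin 3,
    if (p.1 : ℕ) + l = (q.1 : ℕ) + 2 ∧ (p.2.1 : ℕ) + h = (q.2.1 : ℕ) + 2
    then K l h q.2.2 p.2.2 else 0

lemma aux_key (W : ℕ) {i i' j j' : ℕ} (hj : j < W) (hj' : j' < W)
    (h : i * W + j = i' * W + j') : i = i' ∧ j = j' := by
  have hW : 0 < W := Nat.pos_of_ne_zero (by rintro rfl; omega)
  have e : W * i + j = W * i' + j' := by rw [mul_comm W i, mul_comm W i']; exact h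
  have hi : i = i' := by
    have := congrArg (· / W) e
    simpa [Nat.mul_add_div hW, Nat.div_eq_of_lt hj, Nat.div_eq_of_lt hj'] using this
  subst hi
  exact ⟨rfl, Nat.add_left_cancel e⟩

/-- The multi-channel top-left padded 3×3 convolution matrix is block lower
triangular with all diagonal blocks equal to the C×C matrix K₃₃; hence it is
invertible iff K₃₃ is, and its determinant is (det K₃₃)^{H·W}. -/
theorem stmt_5 (H W C : ℕ) (hH : 0 < H) (hW : 0 < W)
    (K : Fin 3 → Fin 3 → Fin C → Fin C → ℝ)
    (Kmat : Matrix (Fin C) (Fin C) ℝ) (hKmat : ∀ co ci, Kmat co ci = K 2 2 ci co) :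
    (∀ p q : Fin H × Fin W × Fin C,
      (p.1 : ℕ) * W + (p.2.1 : ℕ) < (q.1 : ℕ) * W + (q.2.1 : ℕ) →
        convMatrixC H W C K p q = 0) ∧
    (∀ (i : Fin H) (j : Fin W) (co ci : Fin C),
      convMatrixC H W C K (i, j, co) (i, j, ci) = Kmat co ci) ∧
    (IsUnit (convMatrixC H W C K) ↔ IsUnit Kmat) ∧
    (convMatrixC H W C K).det = Kmat.det ^ (H * W) := by
  have part1 : ∀ p q : Fin H × Fin W × Fin C,
      (p.1 : ℕ) * W + (p.2.1 : ℕ) < (q.1 : ℕ) * W + (q.2.1 : ℕ) →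
        convMatrixC H W C K p q = 0 := by
    intro p q hlt
    unfold convMatrixC
    apply Finset.sum_eq_zero; intro l _
    apply Finset.sum_eq_zero; intro h _
    rw [if_neg]
    rintro ⟨h1, h2⟩
    have hl := l.isLt
    have hh := h.isLt
    have hq1 : (q.1 : ℕ) ≤ p.1 := by omega
    have hq2 : (q.2.1 : ℕ) ≤ p.2.1 := by omega
    have := Nat.mul_le_mul_right W hq1
    omega
  have part2 : ∀ (i : Fin H) (j : Fin W) (co ci : Fin C),
      convMatrixC H W C K (i, j, co) (i, j, ci) = Kmat co ci := by
    intro i j co ci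
    unfold convMatrixC
    simp [Fin.sum_univ_three, hKmat]
  have hdet : (convMatrixC H W C K).det = Kmat.det ^ (H * W) := by
    rcases Nat.eq_zero_or_pos C with hC | hC
    · subst hC
      haveI : IsEmpty (Fin H × Fin W × Fin 0) := by
        constructor; rintro ⟨-, -, c⟩; exact c.elim0
      simp [Matrix.det_isEmpty]
    set b : Fin H × Fin W × Fin C → ℕ := fun p => (p.1 : ℕ) * W + (p.2.1 : ℕ) with hb
    have hBT : (convMatrixC H W C K).transpose.BlockTriangular b := fun p q h => part1 q p h
    rw [← Matrix.det_transpose, hBT.det]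
    have hblock : ∀ a ∈ Finset.image b Finset.univ,
        ((convMatrixC H W C K).transpose.toSquareBlock b a).det = Kmat.det := by
      intro a ha
      obtain ⟨p₀, -, hp₀⟩ := Finset.mem_image.mp ha
      have huniq : ∀ p : Fin H × Fin W × Fin C, b p = a →
          p.1 = p₀.1 ∧ p.2.1 = p₀.2.1 := by
        intro p hp
        have := aux_key W p.2.1.isLt p₀.2.1.isLt (hp.trans hp₀.symm)
        exact ⟨Fin.ext this.1, Fin.ext this.2⟩
      let f : Fin C ≃ {p : Fin H × Fin W × Fin C // b p = a} :=
        { toFun := fun c => ⟨(p₀.1, p₀.2.1, c), hp₀⟩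
          invFun := fun p => p.1.2.2
          left_inv := fun c => rfl
          right_inv := fun p => by
            obtain ⟨h1, h2⟩ := huniq p.1 p.2
            apply Subtype.ext
            obtain ⟨⟨pi, pj, pc⟩, hp⟩ := p
            simp only at h1 h2 ⊢
            rw [h1, h2] }
      rw [← Matrix.det_submatrix_equiv_self f, ← Matrix.det_transpose Kmat]
      congr 1
      ext c c'
      show (convMatrixC H W C K).transpose (p₀.1, p₀.2.1, c) (p₀.1, p₀.2.1, c') = Kmat c' c
      exact part2 p₀.1 p₀.2.1 c' c
    rw [Finset.prod_congr rfl hblock, Finset.prod_const]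
    congr 1
    have himg : Finset.image b Finset.univ =
        Finset.image (fun ij : Fin H × Fin W => (ij.1 : ℕ) * W + (ij.2 : ℕ)) Finset.univ := by
      apply Finset.Subset.antisymm
      · intro a ha
        obtain ⟨p, -, hp⟩ := Finset.mem_image.mp ha
        exact Finset.mem_image.mpr ⟨(p.1, p.2.1), Finset.mem_univ _, hp⟩
      · intro a ha
        obtain ⟨ij, -, hij⟩ := Finset.mem_image.mp ha
        exact Finset.mem_image.mpr ⟨(ij.1, ij.2, ⟨0, hC⟩), Finset.mem_univ _, hij⟩
    rw [himg, Finset.card_image_of_injective _ ?_]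
    · simp [Fintype.card_prod]
    · rintro ⟨i, j⟩ ⟨i', j'⟩ h
      have := aux_key W j.isLt j'.isLt h
      exact Prod.ext (Fin.ext this.1) (Fin.ext this.2)
  refine ⟨part1, part2, ?_, hdet⟩
  rw [Matrix.isUnit_iff_isUnit_det, Matrix.isUnit_iff_isUnit_det, hdet,
    isUnit_pow_iff (Nat.mul_ne_zero hH.ne' hW.ne')]
end

section
/- The inverse of an invertible top-left-padded 3×3 convolution (with K_{3,3} ≠ 0, single channel, H,W ≥ 2) is in general not itself a convolution: specifically, M^{-1} need not have the banded Toeplitz-like sparsity structure of a convolution matrix. Formally: there exists a 3×3 kernel K with K_{3,3} ≠ 0 and dimensions H, W such that M^{-1} has a nonzero entry (p,q) with |p_x − q_x| > 2 or |p_y − q_y| > 2. -/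
/-- Example kernel: identity plus a shift by one pixel in the width direction. -/
noncomputable def myK : Fin 3 → Fin 3 → ℝ := fun l h =>
  if l = 2 ∧ (h = 2 ∨ h = 1) then 1 else 0

/-- Explicit inverse of `convMatrix 2 4 myK`. -/
noncomputable def myN : Matrix (Fin 2 × Fin 4) (Fin 2 × Fin 4) ℝ := fun p q =>
  if p.1 = q.1 ∧ (q.2 : ℕ) ≤ (p.2 : ℕ) then (-1 : ℝ) ^ ((p.2 : ℕ) - (q.2 : ℕ)) else 0

set_option maxHeartbeats 2000000 in
lemma hMN : convMatrix 2 4 myK * myN = 1 := by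
  ext ⟨i, j⟩ ⟨a, b⟩
  simp only [Matrix.mul_apply, convMatrix, myK, myN, Fintype.sum_prod_type,
    Fin.sum_univ_succ, Fin.sum_univ_zero, Matrix.one_apply, Prod.mk.injEq]
  fin_cases i <;> fin_cases j <;> fin_cases a <;> fin_cases b <;> norm_num [Fin.ext_iff]

/-- The inverse of an invertible top-left padded 3×3 convolution is in general
not itself a convolution: there is an instance whose inverse matrix has a
nonzero entry linking pixels more than 2 apart in some spatial coordinate. -/
theorem stmt_7 :
    ∃ (H W : ℕ) (K : Fin 3 → Fin 3 → ℝ), 2 ≤ H ∧ 2 ≤ W ∧ K 2 2 ≠ 0 ∧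
      ∃ p q : Fin H × Fin W,
        (convMatrix H W K)⁻¹ p q ≠ 0 ∧
        (2 < |(p.2 : ℤ) - (q.2 : ℤ)| ∨ 2 < |(p.1 : ℤ) - (q.1 : ℤ)|) := by
  refine ⟨2, 4, myK, le_refl 2, by norm_num, by norm_num [myK], ⟨0, 3⟩, ⟨0, 0⟩, ?_, ?_⟩
  · rw [Matrix.inv_eq_right_inv hMN]
    norm_num [myN]
  · left
    show (2 : ℤ) < |((3 : Fin 4) : ℤ) - ((0 : Fin 4) : ℤ)|
    decide
end

section
/- The masked top-left-padded 3×3 convolution, in which the kernel entry K_{3,3} is replaced by a fixed nonzero value and entries are otherwise arbitrary, always yields an invertible linear map, and its log-determinant is H·W·log|K_{3,3}|, independent of the other kernel entries. -/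
lemma convMatrix_diag (H W : ℕ) (K : Fin 3 → Fin 3 → ℝ) (p : Fin H × Fin W) :
    convMatrix H W K p p = K 2 2 := by
  simp [convMatrix, Fin.sum_univ_three]

lemma convMatrix_zero (H W : ℕ) (K : Fin 3 → Fin 3 → ℝ) (p q : Fin H × Fin W)
    (h : (p.1 : ℕ) < q.1 ∨ ((p.1 : ℕ) = q.1 ∧ (p.2 : ℕ) < q.2)) :
    convMatrix H W K p q = 0 := by
  apply Finset.sum_eq_zero; intro l _
  apply Finset.sum_eq_zero; intro h' _
  rw [if_neg]
  rintro ⟨h1, h2⟩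
  have hl := l.isLt
  have hh := h'.isLt
  omega

lemma convMatrix_det (H W : ℕ) (K : Fin 3 → Fin 3 → ℝ) :
    (convMatrix H W K).det = K 2 2 ^ (H * W) := by
  have e := (finProdFinEquiv : Fin H × Fin W ≃ Fin (H * W))
  rw [← Matrix.det_submatrix_equiv_self finProdFinEquiv.symm (convMatrix H W K)]
  rw [Matrix.det_of_lowerTriangular]
  · simp only [Matrix.submatrix_apply]
    rw [Finset.prod_congr rfl (fun i _ => convMatrix_diag H W K _)]
    simp
  · intro i j hij
    simp only [Matrix.submatrix_apply]
    set p := finProdFinEquiv.symm i with hp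
    set q := finProdFinEquiv.symm j with hq
    apply convMatrix_zero
    have hi : (i : ℕ) = (p.2 : ℕ) + W * p.1 := by
      rw [hp]; conv_lhs => rw [← finProdFinEquiv.apply_symm_apply i]
      rfl
    have hj : (j : ℕ) = (q.2 : ℕ) + W * q.1 := by
      rw [hq]; conv_lhs => rw [← finProdFinEquiv.apply_symm_apply j]
      rfl
    have hlt : (i : ℕ) < j := hij
    have hp2 := p.2.isLt
    have hq2 := q.2.isLt
    -- from q.2 + W*q.1 < p.2 + W*p.1 conclude q.1 < p.1 ∨ (q.1 = p.1 ∧ q.2 < p.2)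
    rcases lt_trichotomy (p.1 : ℕ) (q.1 : ℕ) with h1 | h1 | h1
    · exact Or.inl h1
    · right; refine ⟨h1, ?_⟩
      have hW : W * (p.1 : ℕ) = W * q.1 := by rw [h1]
      omega
    · exfalso
      have h2 : W * ((p.1:ℕ)) ≥ W * ((q.1:ℕ) + 1) := Nat.mul_le_mul_left W h1
      have h3 : W * ((q.1:ℕ) + 1) = W * q.1 + W := by ring
      omega

/-- The masked top-left padded 3×3 convolution (K₃₃ fixed nonzero, the other
kernel entries arbitrary) is always invertible and its log-determinant is
H·W·log|K₃₃|, independent of the other kernel entries. -/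
theorem stmt_8 (H W : ℕ) (K : Fin 3 → Fin 3 → ℝ) (hK : K 2 2 ≠ 0) :
    IsUnit (convMatrix H W K) ∧
    Real.log |(convMatrix H W K).det| = (H * W : ℝ) * Real.log |K 2 2| := by
  have hd := convMatrix_det H W K
  constructor
  · rw [Matrix.isUnit_iff_isUnit_det, hd]
    exact (isUnit_iff_ne_zero.mpr (pow_ne_zero _ hK))
  · rw [hd, abs_pow, Real.log_pow]
    push_cast
    ring
end

section
/- With standard symmetric zero padding (1 pixel on all four sides), there exists a 3×3 kernel K with K_{3,3} ≠ 0 such that the corresponding linear map on an H×W image (for some H, W ≥ 2) is singular. -/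
/-- Matrix of the 3×3 convolution on an H×W single-channel image with standard
symmetric zero padding of 1 pixel on all four sides (output shape H×W). -/
def symConvMatrix (H W : ℕ) (K : Fin 3 → Fin 3 → ℝ) :
    Matrix (Fin H × Fin W) (Fin H × Fin W) ℝ := fun p q =>
  ∑ l : Fin 3, ∑ h : Fin 3,
    if (p.1 : ℕ) + l = (q.1 : ℕ) + 1 ∧ (p.2 : ℕ) + h = (q.2 : ℕ) + 1 then K l h else 0

/-- With symmetric padding, a 3×3 convolution can be singular even though
K₃₃ ≠ 0. -/
theorem stmt_14 :
    ∃ (H W : ℕ) (K : Fin 3 → Fin 3 → ℝ), 2 ≤ H ∧ 2 ≤ W ∧ K 2 2 ≠ 0 ∧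
      (symConvMatrix H W K).det = 0 := by
  refine ⟨2, 2, fun _ _ => 1, le_refl 2, le_refl 2, one_ne_zero, ?_⟩
  have hrow : symConvMatrix 2 2 (fun _ _ => 1) (0, 0) = symConvMatrix 2 2 (fun _ _ => 1) (0, 1) := by
    funext q
    fin_cases q <;>
      simp [symConvMatrix, Fin.sum_univ_succ] <;> decide
  exact Matrix.det_zero_of_row_eq (by decide) hrow
end
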